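/- For m ≥ 2 and t ≥ 1, the generalized Mycielskian μ_t(K_{1,m}) has no distinguishing edge coloring with fewer than r colors, where r is the minimum natural number such that r² ≥ m + 1; that is, Dist′(μ_t(K_{1,m})) ≥ r. -/

import Mathlib

open SimpleGraph

universe u

/-- A distinguishing edge coloring: no nontrivial automorphism preserves the coloring. -/
def IsDistEdgeColoring {V : Type u} (G : SimpleGraph V) {C : Type*} (c : G.edgeSet → C) : Prop :=
  ∀ φ : G ≃g G, (∀ e : G.edgeSet, c (φ.mapEdgeSet e) = c e) → ∀ v, φ v = v

/-- The distinguishing index: least number of colors in a distinguishing edge coloring. -/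
noncomputable def distIndex {V : Type u} (G : SimpleGraph V) : ℕ :=
  sInf {k : ℕ | ∃ c : G.edgeSet → Fin k, IsDistEdgeColoring G c}

/-- The star `K_{1,m}` with center `0`. -/
def starGraphK1n (m : ℕ) : SimpleGraph (Fin (m + 1)) :=
  SimpleGraph.fromRel fun a _ => a = 0

/-- The Mycielskian: `Sum.inl a` are original vertices, `Sum.inr (Sum.inl a)` their
shadows, and `Sum.inr (Sum.inr _)` the root. -/
def myc {V : Type u} (G : SimpleGraph V) : SimpleGraph (V ⊕ V ⊕ PUnit.{u+1}) :=
  SimpleGraph.fromRel fun x y =>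
    match x, y with
    | Sum.inl a, Sum.inl b => G.Adj a b
    | Sum.inl a, Sum.inr (Sum.inl b) => G.Adj a b
    | Sum.inr (Sum.inl _), Sum.inr (Sum.inr _) => True
    | _, _ => False

/-- The generalized Mycielskian with `t` extra levels: `Sum.inl (j, a)` is the level-`j`
copy of vertex `a` (level `0` being the original vertices), and `Sum.inr _` is the root. -/
def genMyc {V : Type u} (G : SimpleGraph V) (t : ℕ) :
    SimpleGraph ((Fin (t + 1) × V) ⊕ PUnit.{u+1}) :=
  SimpleGraph.fromRel fun x y =>
    match x, y with
    | Sum.inl (j, a), Sum.inl (k, b) =>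
        ((j.val = 0 ∧ k.val = 0) ∨ k.val = j.val + 1) ∧ G.Adj a b
    | Sum.inl (j, _), Sum.inr _ => j.val = t
    | _, _ => False

/-!
At each level the `m` leaf copies are pairwise twins of degree 2, so a distinguishing edge
colouring with `k` colours gives them pairwise distinct pairs of colours (otherwise swapping two
of them is a colour-preserving automorphism); hence `m ≤ k ^ 2`. If `m = k ^ 2`, every pair occurs
at every level. The copies of the centre together with the root form a cycle whose consecutive
hubs are joined through the `m` leaves of one level, except for the edge from the top copy of the
centre to the root. The reflection of this cycle fixing that edge lifts to a colour-preserving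
automorphism, sending each leaf to the leaf of the mirrored level with the same colour pair; it
moves the root, a contradiction. So `m < k ^ 2`.
-/

namespace SimpleGraph

variable {V : Type*} {G : SimpleGraph V}

def isoOfInvolutive (f : V → V) (hf : Function.Involutive f)
    (hadj : ∀ x y, G.Adj x y → G.Adj (f x) (f y)) : G ≃g G where
  toEquiv := hf.toPerm f
  map_rel_iff' {x y} := ⟨fun h => by simpa only [hf _] using hadj (f x) (f y) h, hadj x y⟩

end SimpleGraph

open SimpleGraph

section DistEdgeColoring

variable {V : Type*} {G : SimpleGraph V} {C : Type*} {c : G.edgeSet → C}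

theorem IsDistEdgeColoring.apply_eq_of_involutive (hc : IsDistEdgeColoring G c) {f : V → V}
    (hf : Function.Involutive f) (hadj : ∀ x y, G.Adj x y → G.Adj (f x) (f y))
    (hcol : ∀ e (he : e ∈ G.edgeSet) (he' : e.map f ∈ G.edgeSet),
      c ⟨e.map f, he'⟩ = c ⟨e, he⟩)
    (v : V) : f v = v :=
  hc (isoOfInvolutive f hf hadj) (fun e => hcol e e.2 _) v

theorem IsDistEdgeColoring.eq_of_twins (hc : IsDistEdgeColoring G c) {a b : V}
    (htwin : ∀ z, G.Adj a z ↔ G.Adj b z)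
    (hcol : ∀ z (ha : G.Adj a z) (hb : G.Adj b z), c ⟨s(a, z), ha⟩ = c ⟨s(b, z), hb⟩) :
    a = b := by
  classical
  have hadj : ∀ x y, G.Adj x y → G.Adj (Equiv.swap a b x) (Equiv.swap a b y) := by
    intro x y h
    simp only [Equiv.swap_apply_def]
    split_ifs <;> grind [SimpleGraph.Adj.symm]
  have hfix := hc.apply_eq_of_involutive (Equiv.swap_apply_self a b) hadj ?_ a
  · rw [Equiv.swap_apply_left] at hfix
    exact hfix.symm
  -- an edge meets `{a, b}` in at most one end, and twin edges have the same colour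
  intro e he he'
  induction e using Sym2.ind with | _ x y => ?_
  have hxy : G.Adj x y := he
  simp only [Sym2.map_mk, Equiv.swap_apply_def]
  split_ifs <;> grind [SimpleGraph.Adj.symm, Sym2.eq_swap]

theorem isDistEdgeColoring_of_injective (hinj : Function.Injective c)
    (hdeg : ∀ v, ∃ x y, x ≠ y ∧ G.Adj v x ∧ G.Adj v y) : IsDistEdgeColoring G c := by
  intro φ hφ v
  have hfix : ∀ x (h : G.Adj v x), s(φ v, φ x) = s(v, x) := fun x h =>
    congrArg Subtype.val (hinj (hφ ⟨s(v, x), h⟩))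
  obtain ⟨x, y, hxy, hx, hy⟩ := hdeg v
  have hx' := hfix x hx
  have hy' := hfix y hy
  simp only [Sym2.eq_iff] at hx' hy'
  -- if `φ` swapped the ends of both edges, then `x = φ v = y`
  grind

theorem exists_isDistEdgeColoring_distIndex
    (h : ∃ k, ∃ c : G.edgeSet → Fin k, IsDistEdgeColoring G c) :
    ∃ c : G.edgeSet → Fin (distIndex G), IsDistEdgeColoring G c :=
  Nat.sInf_mem h

theorem exists_isDistEdgeColoring_fin [Finite V]
    (hdeg : ∀ v, ∃ x y, x ≠ y ∧ G.Adj v x ∧ G.Adj v y) :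
    ∃ k, ∃ c : G.edgeSet → Fin k, IsDistEdgeColoring G c := by
  obtain ⟨k, ⟨e⟩⟩ := Finite.exists_equiv_fin G.edgeSet
  exact ⟨k, e, isDistEdgeColoring_of_injective e.injective hdeg⟩

end DistEdgeColoring

theorem starGraphK1n_adj {m : ℕ} {a b : Fin (m + 1)} :
    (starGraphK1n m).Adj a b ↔ a ≠ b ∧ (a = 0 ∨ b = 0) := by
  rw [starGraphK1n, fromRel_adj]

section genMyc

variable {V : Type*} {G : SimpleGraph V} {t : ℕ}

theorem genMyc_adj_inl_inl {j k : Fin (t + 1)} {a b : V} :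
    (genMyc G t).Adj (Sum.inl (j, a)) (Sum.inl (k, b)) ↔
      G.Adj a b ∧
        (((j : ℕ) = 0 ∧ (k : ℕ) = 0) ∨ (k : ℕ) = j + 1 ∨ (j : ℕ) = k + 1) := by
  rw [genMyc, fromRel_adj]
  constructor
  · rintro ⟨-, ⟨hjk, hab⟩ | ⟨hjk, hba⟩⟩
    · exact ⟨hab, by omega⟩
    · exact ⟨hba.symm, by omega⟩
  · rintro ⟨hab, hjk⟩
    refine ⟨fun h => hab.ne (Prod.ext_iff.1 (Sum.inl_injective h)).2, ?_⟩
    rcases hjk with h | h | h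
    · exact Or.inl ⟨Or.inl h, hab⟩
    · exact Or.inl ⟨Or.inr h, hab⟩
    · exact Or.inr ⟨Or.inr h, hab.symm⟩

theorem genMyc_adj_inl_inr {j : Fin (t + 1)} {a : V} {u : PUnit} :
    (genMyc G t).Adj (Sum.inl (j, a)) (Sum.inr u) ↔ (j : ℕ) = t := by
  simp [genMyc]

theorem genMyc_not_adj_inr_inr {u v : PUnit} : ¬ (genMyc G t).Adj (Sum.inr u) (Sum.inr v) := by
  simp [genMyc]

end genMyc

namespace GenMycStar

variable {m t : ℕ}

abbrev Vert (m t : ℕ) : Type := (Fin (t + 1) × Fin (m + 1)) ⊕ PUnit.{1}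

/-- Hub `i ≤ t` is the level-`i` copy of the centre, hub `t + 1` the root. -/
def hub (i : ℕ) : Vert m t :=
  if h : i ≤ t then Sum.inl (⟨i, Nat.lt_succ_of_le h⟩, 0) else Sum.inr PUnit.unit

def leaf (j : Fin (t + 1)) (a : Fin m) : Vert m t := Sum.inl (j, a.succ)

/-- The two hubs adjacent to a leaf of level `j`; truncated subtraction gives hub `0` as the lower
one at level `0`. -/
def nbrIdx (j : ℕ) (up : Bool) : ℕ := if up then j + 1 else j - 1

@[simp]
theorem nbrIdx_false (j : ℕ) : nbrIdx j false = j - 1 := rfl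

@[simp]
theorem nbrIdx_true (j : ℕ) : nbrIdx j true = j + 1 := rfl

theorem leaf_injective (j : Fin (t + 1)) : Function.Injective (leaf (m := m) j) := fun _ _ h =>
  Fin.succ_injective _ (Prod.ext_iff.1 (Sum.inl_injective h)).2

theorem hub_inj {i i' : ℕ} (hi : i ≤ t + 1) (hi' : i' ≤ t + 1) :
    hub (m := m) (t := t) i = hub i' ↔ i = i' := by
  unfold hub
  split_ifs <;> simp [Fin.ext_iff] <;> omega

theorem eq_hub_or_eq_leaf (v : Vert m t) :
    (∃ i ≤ t + 1, v = hub i) ∨ ∃ j a, v = leaf j a := by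
  rcases v with ⟨j, a⟩ | ⟨⟩
  · cases a using Fin.cases with
    | zero => exact Or.inl ⟨j, by omega, by simp [hub, j.is_le]⟩
    | succ a => exact Or.inr ⟨j, a, rfl⟩
  · exact Or.inl ⟨t + 1, le_rfl, by simp [hub]⟩

theorem adj_leaf_hub {j : Fin (t + 1)} {a : Fin m} {i : ℕ} (hi : i ≤ t + 1) :
    (genMyc (starGraphK1n m) t).Adj (leaf j a) (hub i) ↔ i = j - 1 ∨ i = j + 1 := by
  unfold hub leaf
  split_ifs with h
  · simp only [genMyc_adj_inl_inl, starGraphK1n_adj, ne_eq, Fin.succ_ne_zero, not_false_eq_true,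
      or_true, true_and]
    omega
  · rw [genMyc_adj_inl_inr]
    omega

theorem not_adj_leaf_leaf {j k : Fin (t + 1)} {a b : Fin m} :
    ¬ (genMyc (starGraphK1n m) t).Adj (leaf j a) (leaf k b) := by
  simp [leaf, genMyc_adj_inl_inl, starGraphK1n_adj]

theorem adj_hub_hub {i i' : ℕ} (hi : i ≤ t + 1) (hi' : i' ≤ t + 1) :
    (genMyc (starGraphK1n m) t).Adj (hub i) (hub i') ↔
      i = t ∧ i' = t + 1 ∨ i = t + 1 ∧ i' = t := by
  unfold hub
  split_ifs
  · simp only [genMyc_adj_inl_inl, starGraphK1n_adj, ne_eq, not_true_eq_false, false_and,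
      false_iff]
    omega
  · rw [genMyc_adj_inl_inr, Fin.val_mk]
    omega
  · rw [adj_comm, genMyc_adj_inl_inr, Fin.val_mk]
    omega
  · simp only [genMyc_not_adj_inr_inr, false_iff]
    omega

theorem adj_leaf_nbr (j : Fin (t + 1)) (a : Fin m) (up : Bool) :
    (genMyc (starGraphK1n m) t).Adj (leaf j a) (hub (nbrIdx j up)) := by
  have := j.is_le
  cases up
  · exact (adj_leaf_hub (by simp; omega)).2 (Or.inl rfl)
  · exact (adj_leaf_hub (by simp; omega)).2 (Or.inr rfl)

theorem adj_leaf_iff {j : Fin (t + 1)} {a : Fin m} {y : Vert m t} :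
    (genMyc (starGraphK1n m) t).Adj (leaf j a) y ↔ ∃ up, y = hub (nbrIdx j up) := by
  refine ⟨fun h => ?_, fun ⟨up, hy⟩ => hy ▸ adj_leaf_nbr j a up⟩
  rcases eq_hub_or_eq_leaf y with ⟨i, hi, rfl⟩ | ⟨k, b, rfl⟩
  · rcases (adj_leaf_hub hi).1 h with rfl | rfl
    · exact ⟨false, rfl⟩
    · exact ⟨true, rfl⟩
  · exact absurd h not_adj_leaf_leaf

theorem mem_edgeSet_cases {e : Sym2 (Vert m t)} (he : e ∈ (genMyc (starGraphK1n m) t).edgeSet) :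
    (∃ j a up, e = s(leaf j a, hub (nbrIdx j up))) ∨ e = s(hub t, hub (t + 1)) := by
  induction e using Sym2.ind with | _ x y => ?_
  have hxy : (genMyc (starGraphK1n m) t).Adj x y := he
  rcases eq_hub_or_eq_leaf x with ⟨i, hi, rfl⟩ | ⟨j, a, rfl⟩
  · rcases eq_hub_or_eq_leaf y with ⟨i', hi', rfl⟩ | ⟨j, a, rfl⟩
    · rcases (adj_hub_hub hi hi').1 hxy with ⟨rfl, rfl⟩ | ⟨rfl, rfl⟩
      · exact Or.inr rfl
      · exact Or.inr Sym2.eq_swap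
    · obtain ⟨up, hup⟩ := adj_leaf_iff.1 hxy.symm
      exact Or.inl ⟨j, a, up, hup ▸ Sym2.eq_swap⟩
  · obtain ⟨up, rfl⟩ := adj_leaf_iff.1 hxy
    exact Or.inl ⟨j, a, up, rfl⟩

theorem exists_two_adj (hm : 2 ≤ m) (v : Vert m t) :
    ∃ x y, x ≠ y ∧
      (genMyc (starGraphK1n m) t).Adj v x ∧ (genMyc (starGraphK1n m) t).Adj v y := by
  rcases eq_hub_or_eq_leaf v with ⟨i, hi, rfl⟩ | ⟨j, a, rfl⟩
  · have hnbr : nbrIdx (i - 1) (decide (0 < i)) = i := by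
      rcases i with _ | i <;> simp
    let j : Fin (t + 1) := ⟨i - 1, by omega⟩
    refine ⟨leaf j ⟨0, by omega⟩, leaf j ⟨1, by omega⟩,
      fun h => absurd (leaf_injective j h) (by simp), ?_, ?_⟩ <;>
    · rw [adj_comm, ← hnbr]
      exact adj_leaf_nbr j _ _
  · have := j.is_le
    refine ⟨hub (nbrIdx j false), hub (nbrIdx j true), ?_, adj_leaf_nbr j a _,
      adj_leaf_nbr j a _⟩
    rw [Ne, hub_inj] <;> simp [nbrIdx] <;> omega

/-- The hubs `0, …, t + 1` form a cycle: hubs `j - 1` and `j + 1` are joined through the leaves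
of level `j`, and hub `t` is adjacent to hub `t + 1`. `mirror (t + 1)` is the reflection of this
cycle fixing the edge between hubs `t` and `t + 1`, and `mirror t` is the induced permutation of
levels. -/
def mirror (n i : ℕ) : ℕ := if i % 2 = n % 2 then i - 1 else i + 1

theorem mirror_le {n i : ℕ} (h : i ≤ n) : mirror n i ≤ n := by
  unfold mirror; split_ifs <;> omega

theorem mirror_mirror (n i : ℕ) : mirror n (mirror n i) = i := by
  unfold mirror; split_ifs <;> omega

def mirrorLevel (j : Fin (t + 1)) : Fin (t + 1) :=
  ⟨mirror t j, Nat.lt_succ_of_le (mirror_le j.is_le)⟩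

theorem mirrorLevel_mirrorLevel (j : Fin (t + 1)) : mirrorLevel (mirrorLevel j) = j :=
  Fin.ext (mirror_mirror t j)

/-- The only level fixed by `mirrorLevel` is `0`, for even `t`; the reflection exchanges its two
ends. -/
def mirrorEnd (j : Fin (t + 1)) (up : Bool) : Bool := xor (decide (mirrorLevel j = j)) up

theorem mirrorEnd_mirrorEnd (j : Fin (t + 1)) (up : Bool) :
    mirrorEnd (mirrorLevel j) (mirrorEnd j up) = up := by
  simp [mirrorEnd, mirrorLevel_mirrorLevel, eq_comm]

theorem mirror_nbrIdx (j : Fin (t + 1)) (up : Bool) :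
    mirror (t + 1) (nbrIdx j up) = nbrIdx (mirrorLevel j) (mirrorEnd j up) := by
  simp only [mirrorEnd, mirrorLevel, mirror, nbrIdx, Fin.ext_iff]
  grind

def reflect (σ : Fin (t + 1) → Fin m → Fin m) : Vert m t → Vert m t
  | Sum.inl (j, a) => Fin.cases (hub (mirror (t + 1) j)) (fun b => leaf (mirrorLevel j) (σ j b)) a
  | Sum.inr _ => hub t

variable {σ : Fin (t + 1) → Fin m → Fin m}

theorem reflect_hub {i : ℕ} (hi : i ≤ t + 1) : reflect σ (hub i) = hub (mirror (t + 1) i) := by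
  by_cases h : i ≤ t
  · rw [hub, dif_pos h]
    rfl
  · obtain rfl : i = t + 1 := by omega
    rw [hub, dif_neg h]
    simp [reflect, mirror]

theorem reflect_leaf (j : Fin (t + 1)) (a : Fin m) :
    reflect σ (leaf j a) = leaf (mirrorLevel j) (σ j a) := by
  simp [reflect, leaf]

theorem reflect_root_ne : reflect σ (hub (t + 1)) ≠ hub (t + 1) := by
  rw [reflect_hub le_rfl, Ne, hub_inj (by simp [mirror]) le_rfl]
  simp [mirror]

theorem reflect_involutive (hσ : ∀ j a, σ (mirrorLevel j) (σ j a) = a) :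
    Function.Involutive (reflect σ) := by
  intro v
  rcases eq_hub_or_eq_leaf v with ⟨i, hi, rfl⟩ | ⟨j, a, rfl⟩
  · rw [reflect_hub hi, reflect_hub (mirror_le hi), mirror_mirror]
  · rw [reflect_leaf, reflect_leaf, hσ, mirrorLevel_mirrorLevel]

theorem map_reflect_leaf_edge (j : Fin (t + 1)) (a : Fin m) (up : Bool) :
    s(leaf j a, hub (nbrIdx j up)).map (reflect σ) =
      s(leaf (mirrorLevel j) (σ j a), hub (nbrIdx (mirrorLevel j) (mirrorEnd j up))) := by
  have := j.is_le
  rw [Sym2.map_mk, reflect_leaf, reflect_hub (by cases up <;> simp <;> omega), mirror_nbrIdx]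

theorem map_reflect_root_edge :
    s(hub t, hub (t + 1)).map (reflect σ) = s(hub t, hub (t + 1)) := by
  have ht : mirror (t + 1) t = t + 1 := by unfold mirror; split_ifs <;> omega
  have hroot : mirror (t + 1) (t + 1) = t := by simp [mirror]
  rw [Sym2.map_mk, reflect_hub (by omega), reflect_hub le_rfl, ht, hroot, Sym2.eq_swap]

theorem reflect_adj {x y : Vert m t} (h : (genMyc (starGraphK1n m) t).Adj x y) :
    (genMyc (starGraphK1n m) t).Adj (reflect σ x) (reflect σ y) := by
  change s(x, y) ∈ (genMyc (starGraphK1n m) t).edgeSet at h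
  change s(reflect σ x, reflect σ y) ∈ (genMyc (starGraphK1n m) t).edgeSet
  rw [← Sym2.map_mk]
  rcases mem_edgeSet_cases h with ⟨j, a, up, he⟩ | he <;> rw [he] at h ⊢
  · rw [map_reflect_leaf_edge]
    exact adj_leaf_nbr _ _ _
  · rwa [map_reflect_root_edge]

section Coloring

variable {k : ℕ} {c : (genMyc (starGraphK1n m) t).edgeSet → Fin k}

variable (c) in
def profile (j : Fin (t + 1)) (a : Fin m) (up : Bool) : Fin k :=
  c ⟨s(leaf j a, hub (nbrIdx j up)), adj_leaf_nbr j a up⟩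

theorem profile_injective (hc : IsDistEdgeColoring (genMyc (starGraphK1n m) t) c)
    (j : Fin (t + 1)) : Function.Injective (profile c j) := by
  intro a b hab
  refine leaf_injective j (hc.eq_of_twins (fun z => by rw [adj_leaf_iff, adj_leaf_iff]) ?_)
  intro z ha hb
  obtain ⟨up, rfl⟩ := adj_leaf_iff.1 ha
  exact congrFun hab up

theorem exists_profile_reflect_ne (hc : IsDistEdgeColoring (genMyc (starGraphK1n m) t) c)
    (hσ : ∀ j a, σ (mirrorLevel j) (σ j a) = a) :
    ∃ j a up, profile c (mirrorLevel j) (σ j a) (mirrorEnd j up) ≠ profile c j a up := by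
  by_contra! hprofile
  refine reflect_root_ne (hc.apply_eq_of_involutive (reflect_involutive hσ)
    (fun _ _ => reflect_adj) ?_ (hub (t + 1)))
  intro e he he'
  rcases mem_edgeSet_cases he with ⟨j, a, up, rfl⟩ | rfl
  · simp only [map_reflect_leaf_edge]
    exact hprofile j a up
  · simp only [map_reflect_root_edge]

theorem lt_sq_of_isDistEdgeColoring (hc : IsDistEdgeColoring (genMyc (starGraphK1n m) t) c) :
    m < k ^ 2 := by
  have hle : m ≤ k ^ 2 := by
    simpa [sq] using Fintype.card_le_of_injective _ (profile_injective hc 0)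
  refine hle.lt_of_ne fun hcard => ?_
  have hbij (j : Fin (t + 1)) : Function.Bijective (profile c j) :=
    (Fintype.bijective_iff_injective_and_card _).2 ⟨profile_injective hc j, by simp [hcard, sq]⟩
  -- every colour pair occurs at every level, so the reflection can carry each profile along
  let E (j : Fin (t + 1)) : Fin m ≃ (Bool → Fin k) := Equiv.ofBijective _ (hbij j)
  let σ (j : Fin (t + 1)) (a : Fin m) : Fin m :=
    (E (mirrorLevel j)).symm fun up => profile c j a (mirrorEnd (mirrorLevel j) up)
  have hprofile (j a up) : profile c (mirrorLevel j) (σ j a) (mirrorEnd j up) = profile c j a up :=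
    (congrFun ((E (mirrorLevel j)).apply_symm_apply _) (mirrorEnd j up)).trans
      (congrArg _ (mirrorEnd_mirrorEnd j up))
  have hσ (j a) : σ (mirrorLevel j) (σ j a) = a := by
    refine (hbij j).1 (funext fun up => ?_)
    have h := hprofile (mirrorLevel j) (σ j a) (mirrorEnd j up)
    rwa [mirrorLevel_mirrorLevel, mirrorEnd_mirrorEnd, hprofile] at h
  obtain ⟨j, a, up, hne⟩ := exists_profile_reflect_ne hc hσ
  exact hne (hprofile j a up)

end Coloring

end GenMycStar

theorem distIndex_genMyc_star_ge_general (m t : ℕ) (hm : 2 ≤ m) :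
    sInf {r : ℕ | m + 1 ≤ r ^ 2} ≤ distIndex (genMyc (starGraphK1n m) t) := by
  obtain ⟨c, hc⟩ := exists_isDistEdgeColoring_distIndex
    (exists_isDistEdgeColoring_fin (GenMycStar.exists_two_adj hm))
  exact Nat.sInf_le (GenMycStar.lt_sq_of_isDistEdgeColoring hc)

theorem distIndex_genMyc_star_ge (m t : ℕ) (hm : 2 ≤ m) (ht : 1 ≤ t) :
    sInf {r : ℕ | m + 1 ≤ r ^ 2} ≤ distIndex (genMyc (starGraphK1n m) t) :=
  distIndex_genMyc_star_ge_general m t hm
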